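/- arXiv:1005.0489 — 4 statements merged into one kernel-verified Lean document; each statement's English description precedes it below -/
import Mathlib

section
/- Let X be a contractive normed c₀-module, Ann X := {x ∈ X : a•x = 0 for all a ∈ c₀} its annihilator (a closed submodule), and let σ : X → X/Ann X be the quotient map onto the quotient normed c₀-module X^red := X/Ann X with the quotient norm. Then for every n ∈ ℕ, σ restricted to the n-th coordinate submodule Xₙ is an isometric isomorphism of Xₙ onto the n-th coordinate submodule (X^red)ₙ of the quotient. -/
open Filter MeasureTheory

noncomputable section

/-- The algebra `c₀` of complex sequences converging to zero, with pointwise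
operations and the supremum norm. -/
abbrev czero : Type := ZeroAtInftyContinuousMap ℕ ℂ

/-- The `n`-th ort: the indicator sequence of `{n}`. -/
def ort (n : ℕ) : czero where
  toFun := fun m => if m = n then 1 else 0
  continuous_toFun := continuous_of_discreteTopology
  zero_at_infty' := by
    rw [cocompact_eq_atTop]
    have h : (fun m : ℕ => if m = n then (1 : ℂ) else 0) =ᶠ[atTop] fun _ => (0 : ℂ) := by
      filter_upwards [eventually_gt_atTop n] with m hm
      simp [Nat.ne_of_gt hm]
    exact (tendsto_congr' h).mpr tendsto_const_nhds

/-- `P N = p⁰ + ⋯ + p^{N-1}`. -/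
def PN (N : ℕ) : czero := ∑ n ∈ Finset.range N, ort n

/-- A (contractive) normed `c₀`-module structure on a complex normed space `X`. -/
structure C0Mod (X : Type) [NormedAddCommGroup X] [NormedSpace ℂ X] where
  smul : czero → X → X
  add_smul : ∀ a b x, smul (a + b) x = smul a x + smul b x
  smul_add : ∀ a x y, smul a (x + y) = smul a x + smul a y
  mul_smul : ∀ a b x, smul (a * b) x = smul a (smul b x)
  csmul_left : ∀ (c : ℂ) a x, smul (c • a) x = c • smul a x
  csmul_right : ∀ (c : ℂ) a x, smul a (c • x) = c • smul a x
  norm_smul_le : ∀ a x, ‖smul a x‖ ≤ ‖a‖ * ‖x‖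

namespace C0Mod

variable {X : Type} [NormedAddCommGroup X] [NormedSpace ℂ X] (M : C0Mod X)

/-- The action of `a ∈ c₀` as a continuous linear map. -/
def lsmul (a : czero) : X →L[ℂ] X :=
  LinearMap.mkContinuous
    { toFun := M.smul a
      map_add' := M.smul_add a
      map_smul' := fun c x => M.csmul_right c a x }
    ‖a‖ (fun x => M.norm_smul_le a x)

@[simp] lemma lsmul_apply (a : czero) (x : X) : M.lsmul a x = M.smul a x := rfl

/-- The essential part `X_es` of `X`: the closure of the linear span of all
products `a • x`. -/
def essSet : Set X :=
  closure (Submodule.span ℂ {y : X | ∃ (a : czero) (x : X), y = M.smul a x} : Set X)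

/-- A module is essential if it coincides with its essential part. -/
def Essential : Prop := M.essSet = Set.univ

/-- The `n`-th coordinate submodule `Xₙ = {pⁿ • x : x ∈ X}`. -/
def coordSub (n : ℕ) : Submodule ℂ X := LinearMap.range ((M.lsmul (ort n)) : X →ₗ[ℂ] X)

lemma mem_coordSub (n : ℕ) (x : X) : M.smul (ort n) x ∈ M.coordSub n := ⟨x, rfl⟩

/-- A module is homogeneous if the norm of an element is determined by the norms
of its coordinates. -/
def Homogeneous : Prop :=
  ∀ x y : X, (∀ n : ℕ, ‖M.smul (ort n) x‖ = ‖M.smul (ort n) y‖) → ‖x‖ = ‖y‖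

/-- The annihilator of `c₀` in `X`. -/
def ann : Submodule ℂ X where
  carrier := {x : X | ∀ a : czero, M.smul a x = 0}
  add_mem' := by
    intro x y hx hy
    intro a
    rw [M.smul_add, hx a, hy a, add_zero]
  zero_mem' := by
    intro a
    have h := M.smul_add a 0 0
    simp only [add_zero] at h
    have := congrArg (fun z => z - M.smul a 0) h
    simpa using this.symm
  smul_mem' := by
    intro c x hx a
    rw [M.csmul_right, hx a, smul_zero]

lemma ort_mul_ort (n : ℕ) : ort n * ort n = ort n := by
  ext m
  simp only [ZeroAtInftyContinuousMap.coe_mul, Pi.mul_apply]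
  show (if m = n then (1:ℂ) else 0) * (if m = n then 1 else 0) = (if m = n then 1 else 0)
  split_ifs <;> simp

lemma norm_ort_le (n : ℕ) : ‖ort n‖ ≤ 1 := by
  rw [← ZeroAtInftyContinuousMap.norm_toBCF_eq_norm]
  apply (BoundedContinuousFunction.norm_le zero_le_one).mpr
  intro m
  show ‖if m = n then (1:ℂ) else 0‖ ≤ 1
  split_ifs <;> simp

lemma smul_ort_idem (n : ℕ) (x : X) :
    M.smul (ort n) (M.smul (ort n) x) = M.smul (ort n) x := by
  rw [← M.mul_smul, ort_mul_ort]

lemma smul_ort_self {n : ℕ} {y : X} (hy : y ∈ M.coordSub n) : M.smul (ort n) y = y := by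
  obtain ⟨x, rfl⟩ := hy
  exact M.smul_ort_idem n x

lemma smul_sub (a : czero) (x y : X) :
    M.smul a (x - y) = M.smul a x - M.smul a y :=
  (M.lsmul a).map_sub x y

end C0Mod

/-- Let `Ann X` be the annihilator of `c₀` in `X` and
`σ : X → X/Ann X` the quotient map onto the reduced module with the quotient
norm.  Then for every `n`, `σ` restricted to the `n`-th coordinate submodule
`Xₙ` is an isometric isomorphism onto the `n`-th coordinate submodule
`(X^red)ₙ = {σ(pⁿ • x) : x ∈ X}` of the quotient (on which the induced
`c₀`-action is `pⁿ • σ(x) = σ(pⁿ • x)`). -/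
theorem quotient_coord_isometric
    {X : Type} [NormedAddCommGroup X] [NormedSpace ℂ X] (M : C0Mod X) (n : ℕ) :
    (∀ y ∈ M.coordSub n, ‖(Submodule.Quotient.mk y : X ⧸ M.ann)‖ = ‖y‖) ∧
    Set.InjOn (fun y : X => (Submodule.Quotient.mk y : X ⧸ M.ann))
      (M.coordSub n : Set X) ∧
    (fun y : X => (Submodule.Quotient.mk y : X ⧸ M.ann)) '' (M.coordSub n : Set X) =
      {q : X ⧸ M.ann | ∃ x : X, q = Submodule.Quotient.mk (M.smul (ort n) x)} := by
  refine ⟨?_, ?_, ?_⟩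
  · intro y hy
    refine le_antisymm (Submodule.Quotient.norm_mk_le _ y) ?_
    have hnorm : ‖(Submodule.Quotient.mk y : X ⧸ M.ann)‖
        = Metric.infDist y (M.ann : Set X) := QuotientAddGroup.norm_mk y
    rw [hnorm]
    by_contra hlt
    push_neg at hlt
    obtain ⟨z, hz, hdz⟩ := (Metric.infDist_lt_iff ⟨0, Submodule.zero_mem _⟩).mp hlt
    refine absurd hdz (not_lt.mpr ?_)
    have h1 : M.smul (ort n) (y - z) = y := by
      rw [M.smul_sub, hz (ort n), sub_zero, M.smul_ort_self hy]
    calc ‖y‖ = ‖M.smul (ort n) (y - z)‖ := by rw [h1]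
      _ ≤ ‖ort n‖ * ‖y - z‖ := M.norm_smul_le _ _
      _ ≤ 1 * ‖y - z‖ := by
          exact mul_le_mul_of_nonneg_right (C0Mod.norm_ort_le n) (norm_nonneg _)
      _ = dist y z := by rw [one_mul, dist_eq_norm]
  · intro y₁ h₁ y₂ h₂ h
    have hmem : y₁ - y₂ ∈ M.ann := by
      exact (Submodule.Quotient.eq _).mp h
    have := hmem (ort n)
    rw [M.smul_sub, M.smul_ort_self h₁, M.smul_ort_self h₂] at this
    exact sub_eq_zero.mp this
  · ext q
    constructor
    · rintro ⟨y, hy, rfl⟩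
      obtain ⟨x, rfl⟩ := hy
      exact ⟨x, rfl⟩
    · rintro ⟨x, rfl⟩
      exact ⟨M.smul (ort n) x, M.mem_coordSub n x, rfl⟩
end
end

section
/- Let X be a linear subspace of the space of all complex sequences that is invariant under coordinatewise multiplication by elements of c₀, endowed with a norm making it a contractive c₀-module with respect to this coordinatewise action, and suppose X is essential. Then X is homogeneous; in particular, for x, y ∈ X with |x(n)| = |y(n)| for all n ∈ ℕ one has ‖x‖ = ‖y‖. -/
/-!
Essentiality makes the partial sums `PN N = p⁰ + ⋯ + p^{N-1}` an approximate identity: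
`PN N • x → x` for every `x`. This holds on the products `a • x` because `PN N * a → a` in `c₀`,
and the set where it holds is a closed submodule, the operators `x ↦ PN N • x` being contractions.
If `|y(k)| ≤ |x(k)|` for all `k`, then `PN N • y = c_N • x`, where `c_N` is the truncation of
the quotient `y / x`, a sequence bounded by `1`; hence `‖PN N • y‖ ≤ ‖x‖`, and `‖y‖ ≤ ‖x‖` in the
limit. Finally `x(n) • pⁿ • y = y(n) • pⁿ • x`, so `‖pⁿ • x‖ = ‖pⁿ • y‖` iff `|x(n)| = |y(n)|`.
-/

open Filter MeasureTheory

noncomputable section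

open Topology

lemma ort_apply (n k : ℕ) : ort n k = if k = n then 1 else 0 := rfl

lemma czero_norm_le {a : czero} {C : ℝ} (hC : 0 ≤ C) (h : ∀ k, ‖a k‖ ≤ C) : ‖a‖ ≤ C := by
  rw [← ZeroAtInftyContinuousMap.norm_toBCF_eq_norm]
  exact (BoundedContinuousFunction.norm_le hC).mpr h

def truncate (c : ℕ → ℂ) (N : ℕ) : czero where
  toFun k := if k < N then c k else 0
  continuous_toFun := continuous_of_discreteTopology
  zero_at_infty' := by
    rw [cocompact_eq_atTop]
    refine tendsto_const_nhds.congr' ?_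
    filter_upwards [eventually_ge_atTop N] with k hk
    simp [Nat.not_lt.mpr hk]

lemma truncate_apply (c : ℕ → ℂ) (N k : ℕ) : truncate c N k = if k < N then c k else 0 := rfl

lemma norm_truncate_le {c : ℕ → ℂ} (hc : ∀ k, ‖c k‖ ≤ 1) (N : ℕ) : ‖truncate c N‖ ≤ 1 :=
  czero_norm_le zero_le_one fun k => by
    rw [truncate_apply]
    split_ifs
    exacts [hc k, by simp]

lemma PN_eq_truncate_one (N : ℕ) : PN N = truncate 1 N := by
  induction N with
  | zero => ext k; simp [PN, truncate_apply]
  | succ N ih =>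
    ext k
    rw [PN, Finset.sum_range_succ, ← PN, ih, ZeroAtInftyContinuousMap.add_apply, truncate_apply,
      truncate_apply, ort_apply]
    rcases lt_trichotomy k N with hk | rfl | hk
    · simp [hk, hk.ne, hk.trans (Nat.lt_succ_self N)]
    · simp
    · simp [hk.not_gt, hk.ne', Nat.succ_le_of_lt hk |>.not_gt]

lemma norm_PN_le (N : ℕ) : ‖PN N‖ ≤ 1 :=
  PN_eq_truncate_one N ▸ norm_truncate_le (fun _ => by simp) N

lemma tendsto_PN_mul (a : czero) : Tendsto (fun N => PN N * a) atTop (𝓝 a) := by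
  have ha : Tendsto a atTop (𝓝 0) := cocompact_eq_atTop (α := ℕ) ▸ a.zero_at_infty'
  rw [Metric.tendsto_atTop] at ha ⊢
  intro ε hε
  obtain ⟨N₀, hN₀⟩ := ha (ε / 2) (half_pos hε)
  refine ⟨N₀, fun N hN => ?_⟩
  have htail : ‖PN N * a - a‖ ≤ ε / 2 := by
    refine czero_norm_le (half_pos hε).le fun k => ?_
    rw [ZeroAtInftyContinuousMap.sub_apply, ZeroAtInftyContinuousMap.mul_apply,
      PN_eq_truncate_one, truncate_apply]
    split_ifs with hk
    · simpa using (half_pos hε).le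
    · simpa [dist_eq_norm] using (hN₀ k (hN.trans (Nat.not_lt.mp hk))).le
  rw [dist_eq_norm]
  linarith

namespace C0Mod

variable {X : Type} [NormedAddCommGroup X] [NormedSpace ℂ X]

section

variable (M : C0Mod X)

lemma smul_zero (a : czero) : M.smul a 0 = 0 := (M.lsmul a).map_zero

lemma continuous_smul_left (x : X) : Continuous fun a : czero => M.smul a x :=
  AddMonoidHomClass.continuous_of_bound (AddMonoidHom.mk' (M.smul · x) (M.add_smul · · x)) ‖x‖
    fun a => (M.norm_smul_le a x).trans_eq (mul_comm _ _)

lemma norm_smul_PN_le (N : ℕ) (x : X) : ‖M.smul (PN N) x‖ ≤ ‖x‖ :=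
  (M.norm_smul_le _ x).trans (mul_le_of_le_one_left (norm_nonneg x) (norm_PN_le N))

def convergenceSubmodule : Submodule ℂ X where
  carrier := {x | Tendsto (fun N => M.smul (PN N) x) atTop (𝓝 x)}
  add_mem' hx hy := by simpa only [Set.mem_ofPred_eq, M.smul_add] using hx.add hy
  zero_mem' := by simpa only [Set.mem_ofPred_eq, M.smul_zero] using tendsto_const_nhds
  smul_mem' c x hx := by simpa only [Set.mem_ofPred_eq, M.csmul_right] using hx.const_smul c

lemma isClosed_convergenceSubmodule : IsClosed (M.convergenceSubmodule : Set X) :=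
  (LipschitzWith.uniformEquicontinuous (fun N => M.lsmul (PN N)) 1 fun N =>
    (M.lsmul (PN N)).lipschitz.weaken <|
      (M.lsmul (PN N)).opNorm_le_bound zero_le_one fun x => by
        simpa using M.norm_smul_PN_le N x).equicontinuous.isClosed_setOfPred_tendsto
    continuous_id

lemma tendsto_smul_PN (hess : M.Essential) (x : X) :
    Tendsto (fun N => M.smul (PN N) x) atTop (𝓝 x) := by
  have hgen : {y : X | ∃ (a : czero) (x : X), y = M.smul a x} ⊆ M.convergenceSubmodule := by
    rintro _ ⟨a, w, rfl⟩
    show Tendsto (fun N => M.smul (PN N) (M.smul a w)) atTop (𝓝 (M.smul a w))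
    simpa only [← M.mul_smul, Function.comp_def] using
      ((M.continuous_smul_left w).tendsto a).comp (tendsto_PN_mul a)
  have hx : x ∈ M.essSet := hess ▸ Set.mem_univ x
  exact closure_minimal (Submodule.span_le.mpr hgen) M.isClosed_convergenceSubmodule hx

end

section

variable {M : C0Mod X} {e : X →ₗ[ℂ] (ℕ → ℂ)} (he : Function.Injective e)
  (hcoord : ∀ (a : czero) (x : X) (k : ℕ), e (M.smul a x) k = a k * e x k)
include he hcoord

lemma smul_eq_smul_of_forall_mul_apply {a b : czero} {x y : X}
    (h : ∀ k, a k * e x k = b k * e y k) : M.smul a x = M.smul b y :=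
  he <| funext fun k => by rw [hcoord, hcoord, h]

lemma smul_ort_eq_zero_iff {x : X} {n : ℕ} : M.smul (ort n) x = 0 ↔ e x n = 0 := by
  constructor
  · intro hx
    simpa [hcoord, ort_apply] using congrFun (congrArg e hx) n
  · intro hx
    refine he <| funext fun k => ?_
    rw [hcoord, ort_apply, map_zero]
    split_ifs with hk
    · simp [hk, hx]
    · simp

lemma apply_smul_smul_ort_comm (x y : X) (n : ℕ) :
    e x n • M.smul (ort n) y = e y n • M.smul (ort n) x := by
  rw [← M.csmul_right, ← M.csmul_right]
  refine smul_eq_smul_of_forall_mul_apply he hcoord fun k => ?_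
  rw [map_smul, map_smul, Pi.smul_apply, Pi.smul_apply, ort_apply]
  split_ifs with hk
  · subst hk; simp [smul_eq_mul, mul_comm]
  · simp

lemma norm_smul_ort_eq_iff {x y : X} {n : ℕ} :
    ‖M.smul (ort n) x‖ = ‖M.smul (ort n) y‖ ↔ ‖e x n‖ = ‖e y n‖ := by
  have hrel := congrArg norm (apply_smul_smul_ort_comm he hcoord x y n)
  rw [norm_smul, norm_smul] at hrel
  by_cases hx : e x n = 0
  · simp only [(smul_ort_eq_zero_iff he hcoord).mpr hx, hx, norm_zero, @eq_comm ℝ 0,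
      norm_eq_zero, smul_ort_eq_zero_iff he hcoord]
  · have hxn : 0 < ‖M.smul (ort n) x‖ :=
      norm_pos_iff.mpr ((smul_ort_eq_zero_iff he hcoord).not.mpr hx)
    constructor
    · intro h
      rw [← h] at hrel
      exact mul_right_cancel₀ hxn.ne' hrel
    · intro h
      rw [h] at hrel
      exact (mul_left_cancel₀ (h ▸ norm_ne_zero_iff.mpr hx) hrel).symm

lemma norm_le_norm_of_forall_norm_apply_le (hess : M.Essential) {x y : X}
    (h : ∀ k, ‖e y k‖ ≤ ‖e x k‖) : ‖y‖ ≤ ‖x‖ := by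
  -- the junk value `0 / 0 = 0` is harmless here: `e x k = 0` forces `e y k = 0`
  set c : ℕ → ℂ := fun k => e y k / e x k
  have hc : ∀ k, ‖c k‖ ≤ 1 := fun k => by
    rw [norm_div]
    exact div_le_one_of_le₀ (h k) (norm_nonneg _)
  have hcy : ∀ k, c k * e x k = e y k := fun k => by
    by_cases hx : e x k = 0
    · simpa [hx, eq_comm] using h k
    · exact div_mul_cancel₀ _ hx
  have htrunc : ∀ N, M.smul (PN N) y = M.smul (truncate c N) x := fun N =>
    smul_eq_smul_of_forall_mul_apply he hcoord fun k => by
      rw [PN_eq_truncate_one, truncate_apply, truncate_apply]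
      split_ifs
      · simp [hcy]
      · simp
  refine le_of_tendsto ((M.tendsto_smul_PN hess y).norm) (Eventually.of_forall fun N => ?_)
  calc ‖M.smul (PN N) y‖ = ‖M.smul (truncate c N) x‖ := by rw [htrunc]
    _ ≤ ‖truncate c N‖ * ‖x‖ := M.norm_smul_le _ x
    _ ≤ ‖x‖ := mul_le_of_le_one_left (norm_nonneg x) (norm_truncate_le hc N)

end

end C0Mod

/-- Let `X` be a linear subspace of the space of complex
sequences (realized by an injective linear map `e : X →ₗ[ℂ] (ℕ → ℂ)`),
invariant under coordinatewise multiplication by elements of `c₀`, endowed with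
a norm making it a contractive `c₀`-module for the coordinatewise action, and
suppose `X` is essential.  Then `X` is homogeneous; in particular, if
`|x(n)| = |y(n)|` for all `n` then `‖x‖ = ‖y‖`. -/
theorem essential_sequence_module_homogeneous
    {X : Type} [NormedAddCommGroup X] [NormedSpace ℂ X] (M : C0Mod X)
    (e : X →ₗ[ℂ] (ℕ → ℂ)) (he : Function.Injective e)
    (hcoord : ∀ (a : czero) (x : X) (k : ℕ), e (M.smul a x) k = a k * e x k)
    (hess : M.Essential) :
    M.Homogeneous ∧
      ∀ x y : X, (∀ k : ℕ, ‖e x k‖ = ‖e y k‖) → ‖x‖ = ‖y‖ := by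
  have hnorm : ∀ x y : X, (∀ k, ‖e x k‖ = ‖e y k‖) → ‖x‖ = ‖y‖ := fun x y h =>
    le_antisymm (C0Mod.norm_le_norm_of_forall_norm_apply_le he hcoord hess fun k => (h k).le)
      (C0Mod.norm_le_norm_of_forall_norm_apply_le he hcoord hess fun k => (h k).ge)
  exact ⟨fun x y h => hnorm x y fun k => (C0Mod.norm_smul_ort_eq_iff he hcoord).mp (h k), hnorm⟩
end
end

section
/- Equip ℓ∞ = ℓ∞(ℕ, ℂ) with the contractive c₀-module structure given by coordinatewise multiplication. Then ℓ∞ is extremely injective with respect to the class of all homogeneous contractive normed c₀-modules: for all homogeneous contractive normed c₀-modules X, Y, every isometric morphism i : X → Y and every morphism φ : X → ℓ∞, there exists a morphism ψ : Y → ℓ∞ with ψ ∘ i = φ and ‖ψ‖ = ‖φ‖. -/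
open Filter MeasureTheory

noncomputable section

open scoped ENNReal

lemma czero_apply_norm_le (a : czero) (n : ℕ) : ‖a n‖ ≤ ‖a‖ := by
  rw [← ZeroAtInftyContinuousMap.norm_toBCF_eq_norm]
  exact a.toBCF.norm_coe_le_norm n

lemma memℓp_czero_mul {p : ℝ≥0∞} (hp : 1 ≤ p) (a : czero) (f : ℕ → ℂ)
    (hf : Memℓp f p) : Memℓp (fun n => a n * f n) p := by
  rcases p.trichotomy with rfl | rfl | hpt
  · exact absurd hp (by simp)
  · obtain ⟨C, hC⟩ := hf.bddAbove
    apply memℓp_infty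
    refine ⟨‖a‖ * C, ?_⟩
    rintro r ⟨n, rfl⟩
    calc ‖a n * f n‖ = ‖a n‖ * ‖f n‖ := norm_mul _ _
      _ ≤ ‖a‖ * C := by
          have h1 := czero_apply_norm_le a n
          have h2 : ‖f n‖ ≤ C := hC (Set.mem_range_self n)
          exact mul_le_mul h1 h2 (norm_nonneg _) (norm_nonneg _)
  · apply memℓp_gen
    have hsum : Summable (fun n => ‖a‖ ^ p.toReal * ‖f n‖ ^ p.toReal) :=
      (hf.summable hpt).mul_left _
    refine hsum.of_nonneg_of_le
      (fun n => Real.rpow_nonneg (norm_nonneg _) _) (fun n => ?_)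
    calc ‖a n * f n‖ ^ p.toReal ≤ (‖a‖ * ‖f n‖) ^ p.toReal := by
          apply Real.rpow_le_rpow (norm_nonneg _) _ hpt.le
          rw [norm_mul]
          exact mul_le_mul_of_nonneg_right (czero_apply_norm_le a n) (norm_nonneg _)
      _ = ‖a‖ ^ p.toReal * ‖f n‖ ^ p.toReal :=
          Real.mul_rpow (norm_nonneg _) (norm_nonneg _)

/-- The contractive normed `c₀`-module `ℓ^p(ℕ, ℂ)` (`1 ≤ p ≤ ∞`), with the
coordinatewise action of `c₀`. -/
def lpC0Mod (p : ℝ≥0∞) [hp : Fact (1 ≤ p)] : C0Mod (lp (fun _ : ℕ => ℂ) p) where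
  smul a x := ⟨fun n => a n * x n, memℓp_czero_mul hp.out a x (lp.memℓp x)⟩
  add_smul a b x := by
    apply lp.ext
    rw [lp.coeFn_add]
    funext n
    show ((a + b) n) * x n = a n * x n + b n * x n
    rw [ZeroAtInftyContinuousMap.coe_add, Pi.add_apply, add_mul]
  smul_add a x y := by
    apply lp.ext
    simp only [lp.coeFn_add]
    funext n
    show a n * ((x + y : lp _ p) n) = a n * x n + a n * y n
    rw [lp.coeFn_add, Pi.add_apply, mul_add]
  mul_smul a b x := by
    apply lp.ext
    funext n
    show ((a * b) n) * x n = a n * (b n * x n)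
    rw [ZeroAtInftyContinuousMap.coe_mul, Pi.mul_apply, mul_assoc]
  csmul_left c a x := by
    apply lp.ext
    rw [lp.coeFn_smul]
    funext n
    show ((c • a) n) * x n = c • (a n * x n)
    rw [ZeroAtInftyContinuousMap.coe_smul, Pi.smul_apply, smul_eq_mul, smul_eq_mul, mul_assoc]
  csmul_right c a x := by
    apply lp.ext
    simp only [lp.coeFn_smul]
    funext n
    show a n * ((c • x : lp _ p) n) = c • (a n * x n)
    rw [lp.coeFn_smul, Pi.smul_apply, smul_eq_mul, smul_eq_mul]
    ring
  norm_smul_le a x := by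
    rcases p.trichotomy with rfl | rfl | hpt
    · exact absurd hp.out (by simp)
    · apply lp.norm_le_of_forall_le (mul_nonneg (norm_nonneg a) (norm_nonneg x))
      intro n
      show ‖a n * x n‖ ≤ ‖a‖ * ‖x‖
      rw [norm_mul]
      exact mul_le_mul (czero_apply_norm_le a n)
        (lp.norm_apply_le_norm ENNReal.top_ne_zero x n) (norm_nonneg _) (norm_nonneg _)
    · apply lp.norm_le_of_tsum_le hpt (mul_nonneg (norm_nonneg a) (norm_nonneg x))
      have hx : Summable (fun n => ‖x n‖ ^ p.toReal) := (lp.memℓp x).summable hpt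
      have hax : Summable (fun n => ‖a n * x n‖ ^ p.toReal) :=
        (memℓp_czero_mul hp.out a x (lp.memℓp x)).summable hpt
      have hle : ∀ n : ℕ, ‖a n * x n‖ ^ p.toReal ≤ ‖a‖ ^ p.toReal * ‖x n‖ ^ p.toReal := by
        intro n
        calc ‖a n * x n‖ ^ p.toReal ≤ (‖a‖ * ‖x n‖) ^ p.toReal := by
              apply Real.rpow_le_rpow (norm_nonneg _) _ hpt.le
              rw [norm_mul]
              exact mul_le_mul_of_nonneg_right (czero_apply_norm_le a n) (norm_nonneg _)
          _ = ‖a‖ ^ p.toReal * ‖x n‖ ^ p.toReal :=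
              Real.mul_rpow (norm_nonneg _) (norm_nonneg _)
      calc (∑' n : ℕ, ‖a n * x n‖ ^ p.toReal)
          ≤ ∑' n : ℕ, ‖a‖ ^ p.toReal * ‖x n‖ ^ p.toReal :=
            Summable.tsum_le_tsum hle hax (hx.mul_left _)
        _ = ‖a‖ ^ p.toReal * ∑' n : ℕ, ‖x n‖ ^ p.toReal := tsum_mul_left
        _ = ‖a‖ ^ p.toReal * ‖x‖ ^ p.toReal := by rw [← lp.norm_rpow_eq_tsum hpt]
        _ = (‖a‖ * ‖x‖) ^ p.toReal := (Real.mul_rpow (norm_nonneg _) (norm_nonneg _)).symm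

/-!
The `n`-th coordinate of a morphism `φ : X → ℓ∞` is a functional bounded by `‖φ‖ ‖pⁿ • x‖`.
By Hahn–Banach it extends, through `y ↦ pⁿ • y` and the isometry `i`, to a functional on `Y`
with the same kind of bound. A functional `h` with `‖h y‖ ≤ C ‖pⁿ • y‖` vanishes on the kernel of
`pⁿ`, which contains `a • y - aₙ y`; hence `h (a • y) = aₙ h y`, so the extended coordinates
assemble into a morphism `ψ : Y → ℓ∞`, and `‖ψ‖ ≤ ‖φ‖ ≤ ‖ψ‖`.
-/

open scoped NNReal

theorem ContinuousLinearMap.exists_comp_eq_of_norm_le {𝕜 X Y : Type*} [RCLike 𝕜]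
    [AddCommGroup X] [Module 𝕜 X] [SeminormedAddCommGroup Y] [NormedSpace 𝕜 Y]
    (T : X →ₗ[𝕜] Y) (f : X →ₗ[𝕜] 𝕜) {C : ℝ} (hC : 0 ≤ C) (hf : ∀ x, ‖f x‖ ≤ C * ‖T x‖) :
    ∃ g : Y →L[𝕜] 𝕜, (∀ x, g (T x) = f x) ∧ ∀ y, ‖g y‖ ≤ C * ‖y‖ := by
  obtain ⟨s, hs⟩ := T.rangeRestrict.exists_rightInverse_of_surjective T.range_rangeRestrict
  have hTs : ∀ z : LinearMap.range T, T (s z) = z := fun z =>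
    congrArg Subtype.val (LinearMap.congr_fun hs z)
  have hf_ker : ∀ x, T x = 0 → f x = 0 := fun x hx =>
    norm_le_zero_iff.mp (by simpa [hx] using hf x)
  let g₀ : LinearMap.range T →L[𝕜] 𝕜 :=
    (f ∘ₗ s).mkContinuous C fun z => by simpa [hTs z] using hf (s z)
  have hg₀ : ∀ x, g₀ ⟨T x, LinearMap.mem_range_self T x⟩ = f x := fun x => by
    have : T (s ⟨T x, LinearMap.mem_range_self T x⟩ - x) = 0 := by rw [map_sub, hTs, sub_self]
    simpa [g₀, sub_eq_zero] using hf_ker _ this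
  obtain ⟨g, hg_ext, hg_norm⟩ := exists_extension_norm_eq _ g₀
  refine ⟨g, fun x => (hg_ext _).trans (hg₀ x), fun y => ?_⟩
  calc ‖g y‖ ≤ ‖g‖ * ‖y‖ := g.le_opNorm y
    _ ≤ C * ‖y‖ := by
      gcongr
      exact hg_norm ▸ LinearMap.mkContinuous_norm_le _ hC _

section LinftyPi

variable {𝕜 ι Y : Type*} {E : ι → Type*} [NontriviallyNormedField 𝕜]
  [∀ i, NormedAddCommGroup (E i)] [∀ i, NormedSpace 𝕜 (E i)] [SeminormedAddCommGroup Y] [NormedSpace 𝕜 Y]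

def ContinuousLinearMap.linftyPi (h : ∀ i, Y →L[𝕜] E i) (C : ℝ≥0)
    (hC : ∀ i y, ‖h i y‖ ≤ C * ‖y‖) : Y →L[𝕜] lp E ∞ :=
  LinearMap.mkContinuous
    { toFun := fun y => ⟨fun i => h i y, memℓp_infty ⟨C * ‖y‖, by
        rintro _ ⟨i, rfl⟩
        exact hC i y⟩⟩
      map_add' := fun y z => lp.ext <| funext fun i => map_add (h i) y z
      map_smul' := fun c y => lp.ext <| funext fun i => map_smul (h i) c y }
    C fun y => lp.norm_le_of_forall_le (by positivity) fun i => hC i y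

theorem ContinuousLinearMap.norm_linftyPi_le (h : ∀ i, Y →L[𝕜] E i) (C : ℝ≥0)
    (hC : ∀ i y, ‖h i y‖ ≤ C * ‖y‖) : ‖linftyPi h C hC‖ ≤ C :=
  LinearMap.mkContinuous_norm_le _ C.coe_nonneg _

end LinftyPi

theorem ort_apply_self (n : ℕ) : ort n n = 1 := if_pos rfl

theorem norm_ort_le (n : ℕ) : ‖ort n‖ ≤ 1 := by
  rw [← ZeroAtInftyContinuousMap.norm_toBCF_eq_norm]
  refine (BoundedContinuousFunction.norm_le zero_le_one).2 fun m => ?_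
  change ‖if m = n then (1 : ℂ) else 0‖ ≤ 1
  split_ifs <;> simp

theorem ort_mul (n : ℕ) (a : czero) : ort n * a = a n • ort n := by
  ext m
  change (if m = n then (1 : ℂ) else 0) * a m = a n * (if m = n then (1 : ℂ) else 0)
  split_ifs with h
  · simp [h]
  · simp

@[simp] theorem lpC0Mod_smul_apply (a : czero) (x : lp (fun _ : ℕ => ℂ) ∞) (n : ℕ) :
    (lpC0Mod ∞).smul a x n = a n * x n := rfl

namespace C0Mod

variable {X Y : Type} [NormedAddCommGroup X] [NormedSpace ℂ X]
  [NormedAddCommGroup Y] [NormedSpace ℂ Y]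

theorem norm_ort_smul_le (M : C0Mod X) (n : ℕ) (x : X) : ‖M.smul (ort n) x‖ ≤ ‖x‖ :=
  calc ‖M.smul (ort n) x‖ ≤ ‖ort n‖ * ‖x‖ := M.norm_smul_le _ _
    _ ≤ ‖x‖ := mul_le_of_le_one_left (norm_nonneg x) (norm_ort_le n)

theorem ort_smul_smul (M : C0Mod X) (n : ℕ) (a : czero) (x : X) :
    M.smul (ort n) (M.smul a x) = a n • M.smul (ort n) x := by
  rw [← M.mul_smul, ort_mul, M.csmul_left]

theorem apply_smul_of_norm_le (M : C0Mod X) {n : ℕ} {C : ℝ} (h : X →L[ℂ] ℂ)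
    (hh : ∀ x, ‖h x‖ ≤ C * ‖M.smul (ort n) x‖) (a : czero) (x : X) :
    h (M.smul a x) = a n * h x := by
  have hker : M.smul (ort n) (M.smul a x - a n • x) = 0 := by
    rw [← M.lsmul_apply, map_sub, map_smul, M.lsmul_apply, M.lsmul_apply, ort_smul_smul,
      sub_self]
  have := hh (M.smul a x - a n • x)
  rwa [hker, norm_zero, mul_zero, norm_le_zero_iff, map_sub, map_smul, smul_eq_mul,
    sub_eq_zero] at this

theorem exists_extension_of_norm_le_norm_ort_smul (Mx : C0Mod X) (My : C0Mod Y) (i : X →L[ℂ] Y)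
    (hi_comm : ∀ a x, i (Mx.smul a x) = My.smul a (i x)) (hi_iso : ∀ x, ‖i x‖ = ‖x‖)
    {n : ℕ} {C : ℝ} (hC : 0 ≤ C) (f : X →L[ℂ] ℂ) (hf : ∀ x, ‖f x‖ ≤ C * ‖Mx.smul (ort n) x‖) :
    ∃ h : Y →L[ℂ] ℂ, (∀ x, h (i x) = f x) ∧ ∀ y, ‖h y‖ ≤ C * ‖My.smul (ort n) y‖ := by
  obtain ⟨g, hg_ext, hg_le⟩ := ContinuousLinearMap.exists_comp_eq_of_norm_le
    ((My.lsmul (ort n)).comp i : X →ₗ[ℂ] Y) (f : X →ₗ[ℂ] ℂ) hC fun x => by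
      simpa [← hi_comm, hi_iso] using hf x
  exact ⟨g.comp (My.lsmul (ort n)), hg_ext, fun y => hg_le _⟩

theorem norm_apply_le_norm_ort_smul (M : C0Mod X) (φ : X →L[ℂ] lp (fun _ : ℕ => ℂ) ∞)
    (hφ : ∀ a x, φ (M.smul a x) = (lpC0Mod ∞).smul a (φ x)) (n : ℕ) (x : X) :
    ‖φ x n‖ ≤ ‖φ‖ * ‖M.smul (ort n) x‖ :=
  calc ‖φ x n‖ = ‖φ (M.smul (ort n) x) n‖ := by simp [hφ, ort_apply_self]
    _ ≤ ‖φ (M.smul (ort n) x)‖ := lp.norm_apply_le_norm ENNReal.top_ne_zero _ n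
    _ ≤ ‖φ‖ * ‖M.smul (ort n) x‖ := φ.le_opNorm _

end C0Mod

/-- The `c₀`-module `ℓ∞ = ℓ∞(ℕ, ℂ)` (with the coordinatewise
action) is extremely injective with respect to the class of all homogeneous
contractive normed `c₀`-modules. -/
theorem linfty_extremely_injective :
    ∀ (X Y : Type) [NormedAddCommGroup X] [NormedSpace ℂ X]
      [NormedAddCommGroup Y] [NormedSpace ℂ Y]
      (Mx : C0Mod X) (My : C0Mod Y),
      Mx.Homogeneous → My.Homogeneous →
      ∀ (i : X →L[ℂ] Y),
        (∀ (a : czero) (x : X), i (Mx.smul a x) = My.smul a (i x)) →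
        (∀ x : X, ‖i x‖ = ‖x‖) →
        ∀ (φ : X →L[ℂ] lp (fun _ : ℕ => ℂ) ∞),
          (∀ (a : czero) (x : X), φ (Mx.smul a x) = (lpC0Mod ∞).smul a (φ x)) →
          ∃ ψ : Y →L[ℂ] lp (fun _ : ℕ => ℂ) ∞,
            (∀ (a : czero) (y : Y), ψ (My.smul a y) = (lpC0Mod ∞).smul a (ψ y)) ∧
            (∀ x : X, ψ (i x) = φ x) ∧ ‖ψ‖ = ‖φ‖ := by
  intro X Y _ _ _ _ Mx My _ _ i hi_comm hi_iso φ hφ_comm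
  choose h h_ext h_le using fun n => Mx.exists_extension_of_norm_le_norm_ort_smul My i hi_comm
    hi_iso (norm_nonneg φ) ((lp.evalCLM ℂ (fun _ : ℕ => ℂ) ∞ n).comp φ)
    (Mx.norm_apply_le_norm_ort_smul φ hφ_comm n)
  let ψ := ContinuousLinearMap.linftyPi h ‖φ‖₊ fun n y =>
    (h_le n y).trans (mul_le_mul_of_nonneg_left (My.norm_ort_smul_le n y) (norm_nonneg φ))
  have hψi : ∀ x, ψ (i x) = φ x := fun x => lp.ext <| funext fun n => h_ext n x
  refine ⟨ψ, fun a y => lp.ext <| funext fun n => ?_, hψi,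
    le_antisymm (ContinuousLinearMap.norm_linftyPi_le _ _ _) ?_⟩
  · exact My.apply_smul_of_norm_le (h n) (h_le n) a y
  · refine φ.opNorm_le_bound (norm_nonneg ψ) fun x => ?_
    calc ‖φ x‖ = ‖ψ (i x)‖ := by rw [hψi]
      _ ≤ ‖ψ‖ * ‖x‖ := by simpa [hi_iso] using ψ.le_opNorm (i x)
end
end

section
/- Let X and Y be normed spaces over ℂ and let i : X → Y be a bounded linear operator. Then i is isometric (‖i(x)‖ = ‖x‖ for all x ∈ X) if and only if the adjoint operator i* : Y* → X*, f ↦ f ∘ i, maps the closed unit ball of Y* onto the closed unit ball of X*. -/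
/-- A bounded linear operator `i : X → Y` between complex
normed spaces is isometric if and only if the adjoint operator
`i* : Y* → X*`, `f ↦ f ∘ i`, maps the closed unit ball of `Y*` onto the
closed unit ball of `X*`. -/
theorem isometry_iff_adjoint_maps_ball_onto_ball
    {X Y : Type} [NormedAddCommGroup X] [NormedSpace ℂ X]
    [NormedAddCommGroup Y] [NormedSpace ℂ Y] (i : X →L[ℂ] Y) :
    (∀ x : X, ‖i x‖ = ‖x‖) ↔
      (fun f : Y →L[ℂ] ℂ => f.comp i) '' Metric.closedBall 0 1 =
        (Metric.closedBall 0 1 : Set (X →L[ℂ] ℂ)) := by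
  constructor
  · intro hiso
    apply Set.Subset.antisymm
    · rintro _ ⟨f, hf, rfl⟩
      simp only [Metric.mem_closedBall, dist_zero_right] at hf ⊢
      refine ContinuousLinearMap.opNorm_le_bound _ zero_le_one fun x => ?_
      calc ‖f (i x)‖ ≤ ‖f‖ * ‖i x‖ := f.le_opNorm _
        _ ≤ 1 * ‖x‖ := by rw [hiso]; exact mul_le_mul_of_nonneg_right hf (norm_nonneg _)
    · intro g hg
      simp only [Metric.mem_closedBall, dist_zero_right] at hg
      -- view i as a linear isometry
      set e : X →ₗᵢ[ℂ] Y := ⟨i.toLinearMap, hiso⟩ with he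
      set p : Subspace ℂ Y := LinearMap.range e.toLinearMap with hp
      set eq : X ≃ₗᵢ[ℂ] p := e.equivRange with heq
      set fp : p →L[ℂ] ℂ := g.comp (eq.symm.toContinuousLinearEquiv : p ≃L[ℂ] X).toContinuousLinearMap with hfp
      obtain ⟨F, hF, hFnorm⟩ := exists_extension_norm_eq p fp
      refine ⟨F, ?_, ?_⟩
      · simp only [Metric.mem_closedBall, dist_zero_right]
        rw [hFnorm]
        refine le_trans (ContinuousLinearMap.opNorm_le_bound _ zero_le_one fun z => ?_) le_rfl
        calc ‖fp z‖ = ‖g (eq.symm z)‖ := rfl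
          _ ≤ ‖g‖ * ‖eq.symm z‖ := g.le_opNorm _
          _ = ‖g‖ * ‖z‖ := by rw [eq.symm.norm_map]
          _ ≤ 1 * ‖z‖ := mul_le_mul_of_nonneg_right hg (norm_nonneg _)
      · ext x
        have hmem : i x ∈ p := ⟨x, rfl⟩
        have : F (i x) = fp ⟨i x, hmem⟩ := hF ⟨i x, hmem⟩
        simp only [ContinuousLinearMap.comp_apply]
        rw [this]
        have : eq.symm ⟨i x, hmem⟩ = x := by
          apply eq.injective
          apply Subtype.ext
          simp only [heq, LinearIsometryEquiv.apply_symm_apply]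
          rfl
        simp only [hfp, ContinuousLinearMap.comp_apply]
        rw [show ((eq.symm.toContinuousLinearEquiv : p ≃L[ℂ] X).toContinuousLinearMap ⟨i x, hmem⟩) = eq.symm ⟨i x, hmem⟩ from rfl, this]
  · intro h x
    apply le_antisymm
    · obtain ⟨f, hf, hfx⟩ := exists_dual_vector'' ℂ (i x)
      have hmem : f.comp i ∈ (Metric.closedBall 0 1 : Set (X →L[ℂ] ℂ)) := by
        rw [← h]; exact ⟨f, by simpa using hf, rfl⟩
      simp only [Metric.mem_closedBall, dist_zero_right] at hmem
      calc ‖i x‖ = ‖f (i x)‖ := by rw [hfx]; simp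
        _ = ‖(f.comp i) x‖ := rfl
        _ ≤ ‖f.comp i‖ * ‖x‖ := (f.comp i).le_opNorm _
        _ ≤ 1 * ‖x‖ := mul_le_mul_of_nonneg_right hmem (norm_nonneg _)
        _ = ‖x‖ := one_mul _
    · obtain ⟨g, hg, hgx⟩ := exists_dual_vector'' ℂ x
      have : g ∈ (Metric.closedBall 0 1 : Set (X →L[ℂ] ℂ)) := by
        simpa using hg
      rw [← h] at this
      obtain ⟨f, hf, rfl⟩ := this
      calc ‖x‖ = ‖f.comp i x‖ := by rw [hgx]; simp
        _ = ‖f (i x)‖ := rfl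
        _ ≤ ‖f‖ * ‖i x‖ := f.le_opNorm _
        _ ≤ 1 * ‖i x‖ := mul_le_mul_of_nonneg_right (by simpa using hf) (norm_nonneg _)
        _ = ‖i x‖ := one_mul _
end
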